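/- One has q₂₃!( λ ∧ P₁ ∧ P₂ ) = −d·f₃⁽¹⁾∧f₄⁽²⁾ + d·f₄⁽¹⁾∧f₃⁽²⁾ − e·f₁⁽¹⁾∧f₂⁽²⁾ + e·f₂⁽¹⁾∧f₁⁽²⁾ in Λ²(V₁ ⊕ V₂), and applying to this class the algebra homomorphism induced by the linear map (v₁, v₂) ↦ (c_λ(v₁), v₂) (i.e. the pullback under Φ_Λ×1) yields −de·Σⱼ fⱼ*∧fⱼ⁽²⁾ = −((∫_A λ²)/2)·P₂. (This is equation (bl) of the paper: (Φ_Λ×1)* q₂₃!( q₁₂*c₁(𝒫) · q₁₃*c₁(𝒫) · q₁*λ ) = −(λ²/2)·c₁(𝒫).) -/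
import Mathlib


/-!
Model: `V4 = Fin 4 → ℝ` plays the role of `V*` (basis `f 0, …, f 3`, the `fⱼ*`) and of the
two copies `V₁, V₂` of `V = H¹(Â)` (bases `fⱼ⁽¹⁾, fⱼ⁽²⁾`).  The cohomology of `A×Â×Â` is
`Λ•(V* ⊕ V₁ ⊕ V₂) = ExteriorAlgebra ℝ (V4 × (V4 × V4))`, with `j₁` (resp. `j₂₃`) the algebra
map induced by the inclusion of `V*` (resp. of `V₁ ⊕ V₂`).  `P₁ = Σⱼ fⱼ*∧fⱼ⁽¹⁾` and
`P₂ = Σⱼ fⱼ*∧fⱼ⁽²⁾` are `q₁₂*c₁(𝒫)` and `q₁₃*c₁(𝒫)`.  The pushforward `q₂₃!` is taken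
to be any linear map satisfying its defining properties.
-/

noncomputable section

open ExteriorAlgebra

abbrev V4 : Type := Fin 4 → ℝ

def f (i : Fin 4) : V4 := Pi.single i 1

/-- the point class `ω = f₁*∧f₂*∧f₃*∧f₄* ∈ Λ⁴V*` -/
def ωA : ExteriorAlgebra ℝ V4 :=
  ι ℝ (f 0) * ι ℝ (f 1) * ι ℝ (f 2) * ι ℝ (f 3)

/-- pullback `Λ•V* → Λ•(V* ⊕ V₁ ⊕ V₂)` -/
def j₁ : ExteriorAlgebra ℝ V4 →ₐ[ℝ] ExteriorAlgebra ℝ (V4 × (V4 × V4)) :=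
  ExteriorAlgebra.map (LinearMap.inl ℝ V4 (V4 × V4))

/-- pullback `Λ•(V₁ ⊕ V₂) → Λ•(V* ⊕ V₁ ⊕ V₂)` -/
def j₂₃ : ExteriorAlgebra ℝ (V4 × V4) →ₐ[ℝ] ExteriorAlgebra ℝ (V4 × (V4 × V4)) :=
  ExteriorAlgebra.map (LinearMap.inr ℝ V4 (V4 × V4))

/-- `P₁ = q₁₂*c₁(𝒫) = Σⱼ fⱼ*∧fⱼ⁽¹⁾` -/
def P₁ : ExteriorAlgebra ℝ (V4 × (V4 × V4)) :=
  ∑ j : Fin 4, j₁ (ι ℝ (f j)) * j₂₃ (ι ℝ ((f j, (0 : V4))))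

/-- `P₂ = q₁₃*c₁(𝒫) = Σⱼ fⱼ*∧fⱼ⁽²⁾` -/
def P₂ : ExteriorAlgebra ℝ (V4 × (V4 × V4)) :=
  ∑ j : Fin 4, j₁ (ι ℝ (f j)) * j₂₃ (ι ℝ (((0 : V4), f j)))

/-- the polarization `λ = d·f₁*∧f₂* + e·f₃*∧f₄* ∈ Λ²V*` -/
def lamP (d e : ℝ) : ExteriorAlgebra ℝ V4 :=
  d • (ι ℝ (f 0) * ι ℝ (f 1)) + e • (ι ℝ (f 2) * ι ℝ (f 3))

/-- the contraction map `c_λ : V → V*`, `v ↦ ι_v λ` for `λ = d·f₁*∧f₂* + e·f₃*∧f₄*` -/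
def cLam (d e : ℝ) : V4 →ₗ[ℝ] V4 :=
  Matrix.toLin' !![0, -d, 0, 0; d, 0, 0, 0; 0, 0, 0, -e; 0, 0, e, 0]

/-- the Poincaré class `Σⱼ fⱼ*∧fⱼ⁽²⁾ ∈ Λ²(V* ⊕ V₂)` (target of `(Φ_Λ×1)*`) -/
def Pc₂ : ExteriorAlgebra ℝ (V4 × V4) :=
  ∑ j : Fin 4, ι ℝ ((f j, (0 : V4))) * ι ℝ (((0 : V4), f j))


namespace S11Aux

abbrev EA := ExteriorAlgebra ℝ (V4 × (V4 × V4))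
def av (i : Fin 4) : EA := ι ℝ ((f i, (0 : V4 × V4)))
def bv (i : Fin 4) : EA := ι ℝ (((0:V4), (f i, (0:V4))))
def cv (i : Fin 4) : EA := ι ℝ (((0:V4), ((0:V4), f i)))

theorem ianti {M : Type*} [AddCommGroup M] [Module ℝ M] (x y : M) :
    ι ℝ x * ι ℝ y = -(ι ℝ y * ι ℝ x) :=
  eq_neg_of_add_eq_zero_left (ι_add_mul_swap x y)

theorem ba (i j : Fin 4) : bv i * av j = -(av j * bv i) := ianti _ _
theorem ba' (i j : Fin 4) (x : EA) : bv i * (av j * x) = -(av j * (bv i * x)) := by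
  rw [← mul_assoc, ba, neg_mul, mul_assoc]
theorem asq (i : Fin 4) : av i * av i = 0 := ι_sq_zero _
theorem asq' (i : Fin 4) (x : EA) : av i * (av i * x) = 0 := by
  rw [← mul_assoc, asq, zero_mul]
theorem aa10 : av 1 * av 0 = -(av 0 * av 1) := ianti _ _
theorem aa20 : av 2 * av 0 = -(av 0 * av 2) := ianti _ _
theorem aa21 : av 2 * av 1 = -(av 1 * av 2) := ianti _ _
theorem aa30 : av 3 * av 0 = -(av 0 * av 3) := ianti _ _
theorem aa31 : av 3 * av 1 = -(av 1 * av 3) := ianti _ _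
theorem aa32 : av 3 * av 2 = -(av 2 * av 3) := ianti _ _
theorem aa10' (x : EA) : av 1 * (av 0 * x) = -(av 0 * (av 1 * x)) := by
  rw [← mul_assoc, aa10, neg_mul, mul_assoc]
theorem aa20' (x : EA) : av 2 * (av 0 * x) = -(av 0 * (av 2 * x)) := by
  rw [← mul_assoc, aa20, neg_mul, mul_assoc]
theorem aa21' (x : EA) : av 2 * (av 1 * x) = -(av 1 * (av 2 * x)) := by
  rw [← mul_assoc, aa21, neg_mul, mul_assoc]
theorem aa30' (x : EA) : av 3 * (av 0 * x) = -(av 0 * (av 3 * x)) := by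
  rw [← mul_assoc, aa30, neg_mul, mul_assoc]
theorem aa31' (x : EA) : av 3 * (av 1 * x) = -(av 1 * (av 3 * x)) := by
  rw [← mul_assoc, aa31, neg_mul, mul_assoc]
theorem aa32' (x : EA) : av 3 * (av 2 * x) = -(av 2 * (av 3 * x)) := by
  rw [← mul_assoc, aa32, neg_mul, mul_assoc]

theorem j1i (i : Fin 4) : j₁ (ι ℝ (f i)) = av i := by
  simp [j₁, av, map_apply_ι]
theorem j23b (i : Fin 4) : j₂₃ (ι ℝ ((f i, (0:V4)))) = bv i := by
  simp [j₂₃, bv, map_apply_ι]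
theorem j23c (i : Fin 4) : j₂₃ (ι ℝ (((0:V4), f i))) = cv i := by
  simp [j₂₃, cv, map_apply_ι]

theorem main_identity (d e : ℝ) :
    j₁ (lamP d e) * P₁ * P₂ =
    j₁ ωA * j₂₃ (-d • (ι ℝ ((f 2, (0 : V4))) * ι ℝ (((0 : V4), f 3))) +
        d • (ι ℝ ((f 3, (0 : V4))) * ι ℝ (((0 : V4), f 2))) +
        -e • (ι ℝ ((f 0, (0 : V4))) * ι ℝ (((0 : V4), f 1))) +
        e • (ι ℝ ((f 1, (0 : V4))) * ι ℝ (((0 : V4), f 0)))) := by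
  simp only [lamP, ωA, P₁, P₂, map_add, map_smul, map_mul, Fin.sum_univ_four, j1i, j23b, j23c]
  simp only [mul_add, add_mul, smul_mul_assoc, mul_smul_comm, mul_assoc]
  simp only [ba, ba', asq, asq', aa10, aa20, aa21, aa30, aa31, aa32,
    aa10', aa20', aa21', aa30', aa31', aa32', mul_neg, neg_mul, smul_neg, neg_neg,
    mul_zero, zero_mul, smul_zero, neg_zero, add_zero, zero_add]
  module

theorem cl0 (d e : ℝ) : cLam d e (f 0) = d • f 1 := by
  funext i
  fin_cases i <;>
    simp [cLam, Matrix.toLin'_apply, Matrix.mulVec, dotProduct, f, Fin.sum_univ_four,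
      Pi.single_apply]
theorem cl1 (d e : ℝ) : cLam d e (f 1) = (-d) • f 0 := by
  funext i
  fin_cases i <;>
    simp [cLam, Matrix.toLin'_apply, Matrix.mulVec, dotProduct, f, Fin.sum_univ_four,
      Pi.single_apply]
theorem cl2 (d e : ℝ) : cLam d e (f 2) = e • f 3 := by
  funext i
  fin_cases i <;>
    simp [cLam, Matrix.toLin'_apply, Matrix.mulVec, dotProduct, f, Fin.sum_univ_four,
      Pi.single_apply]
theorem cl3 (d e : ℝ) : cLam d e (f 3) = (-e) • f 2 := by
  funext i
  fin_cases i <;>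
    simp [cLam, Matrix.toLin'_apply, Matrix.mulVec, dotProduct, f, Fin.sum_univ_four,
      Pi.single_apply]

theorem ismul (t : ℝ) (x : V4) : ι ℝ (((t • x : V4), (0:V4))) = t • ι ℝ ((x, (0:V4))) := by
  rw [show ((t • x, (0:V4)) : V4 × V4) = t • (x, (0:V4)) from Prod.ext rfl (smul_zero t).symm,
    map_smul]

theorem map_identity (d e : ℝ) :
    ExteriorAlgebra.map ((cLam d e).prodMap (LinearMap.id : V4 →ₗ[ℝ] V4))
        (-d • (ι ℝ ((f 2, (0 : V4))) * ι ℝ (((0 : V4), f 3))) +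
          d • (ι ℝ ((f 3, (0 : V4))) * ι ℝ (((0 : V4), f 2))) +
          -e • (ι ℝ ((f 0, (0 : V4))) * ι ℝ (((0 : V4), f 1))) +
          e • (ι ℝ ((f 1, (0 : V4))) * ι ℝ (((0 : V4), f 0)))) = (-(d * e)) • Pc₂ := by
  simp only [Pc₂, Fin.sum_univ_four, map_add, map_smul, map_mul, map_apply_ι,
    LinearMap.prodMap_apply, LinearMap.id_apply, cl0, cl1, cl2, cl3, map_zero, ismul,
    smul_mul_assoc]
  module

end S11Aux

/-- `q₂₃!( λ ∧ P₁ ∧ P₂ ) = −d·f₃⁽¹⁾∧f₄⁽²⁾ + d·f₄⁽¹⁾∧f₃⁽²⁾ − e·f₁⁽¹⁾∧f₂⁽²⁾ + e·f₂⁽¹⁾∧f₁⁽²⁾`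
in `Λ²(V₁ ⊕ V₂)`, and applying the algebra map induced by `(v₁, v₂) ↦ (c_λ(v₁), v₂)`
(the pullback under `Φ_Λ×1`) to this class yields `−de·Σⱼ fⱼ*∧fⱼ⁽²⁾ = −((∫_A λ²)/2)·P₂`. -/
theorem stmt11 (d e : ℝ)
    -- `q₂₃! : Λ•(V* ⊕ V₁ ⊕ V₂) → Λ•(V₁ ⊕ V₂)`, integration over the `A`-factor:
    (push : ExteriorAlgebra ℝ (V4 × (V4 × V4)) →ₗ[ℝ] ExteriorAlgebra ℝ (V4 × V4))
    (hpushω : ∀ μ : ExteriorAlgebra ℝ (V4 × V4), push (j₁ ωA * j₂₃ μ) = μ)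
    (hpushlow : ∀ k : ℕ, k < 4 → ∀ γ ∈ ⋀[ℝ]^k V4,
      ∀ μ : ExteriorAlgebra ℝ (V4 × V4), push (j₁ γ * j₂₃ μ) = 0) :
    push (j₁ (lamP d e) * P₁ * P₂) =
        -d • (ι ℝ ((f 2, (0 : V4))) * ι ℝ (((0 : V4), f 3))) +
          d • (ι ℝ ((f 3, (0 : V4))) * ι ℝ (((0 : V4), f 2))) +
          -e • (ι ℝ ((f 0, (0 : V4))) * ι ℝ (((0 : V4), f 1))) +
          e • (ι ℝ ((f 1, (0 : V4))) * ι ℝ (((0 : V4), f 0))) ∧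
      ExteriorAlgebra.map ((cLam d e).prodMap (LinearMap.id : V4 →ₗ[ℝ] V4))
          (push (j₁ (lamP d e) * P₁ * P₂)) =
        (-(d * e)) • Pc₂ := by
  have key : push (j₁ (lamP d e) * P₁ * P₂) =
      -d • (ι ℝ ((f 2, (0 : V4))) * ι ℝ (((0 : V4), f 3))) +
        d • (ι ℝ ((f 3, (0 : V4))) * ι ℝ (((0 : V4), f 2))) +
        -e • (ι ℝ ((f 0, (0 : V4))) * ι ℝ (((0 : V4), f 1))) +
        e • (ι ℝ ((f 1, (0 : V4))) * ι ℝ (((0 : V4), f 0))) := by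
    rw [S11Aux.main_identity]
    exact hpushω _
  exact ⟨key, by rw [key]; exact S11Aux.map_identity d e⟩
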